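/- For every real y with \(|y| \le 1/5\), the iterated derivatives of the stable self-similar Burgers profile satisfy \(|\overline{W}^{(3)}(y)| \le 6\), \(|\overline{W}^{(4)}(y)| \le 30\), and \(|\overline{W}^{(5)}(y)| \le 360\). -/

import Mathlib

/-- The stable self-similar Burgers profile. -/
noncomputable def burgersW (y : ℝ) : ℝ :=
  (-(y / 2) + Real.sqrt (1 / 27 + y ^ 2 / 4)) ^ ((1 : ℝ) / 3)
    - (y / 2 + Real.sqrt (1 / 27 + y ^ 2 / 4)) ^ ((1 : ℝ) / 3)

/-!
Cardano's formula says that `W̄(y)` is the real root of `W³ + W + y = 0`. By the inverse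
function theorem `W̄' = -(1 + 3 W̄²)⁻¹`, so every derivative of `W̄` is a rational function
of `W̄` alone. Since `|y| = |W̄| (1 + W̄²) ≥ |W̄|`, the bounds reduce to polynomial inequalities
in `u = W̄(y)` on `|u| ≤ 1/5`.
-/

open Real

lemma rpow_third_sub_rpow_third_pow_three {a b : ℝ} (ha : 0 ≤ a) (hb : 0 ≤ b) :
    (a ^ (1 / 3 : ℝ) - b ^ (1 / 3 : ℝ)) ^ 3
      = a - b - 3 * (a * b) ^ (1 / 3 : ℝ) * (a ^ (1 / 3 : ℝ) - b ^ (1 / 3 : ℝ)) := by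
  have cube {x : ℝ} (hx : 0 ≤ x) : (x ^ (1 / 3 : ℝ)) ^ 3 = x := by
    simpa [one_div] using rpow_inv_natCast_pow (n := 3) hx (by norm_num)
  rw [mul_rpow ha hb]
  linear_combination cube ha - cube hb

lemma burgersW_cubic (y : ℝ) : burgersW y ^ 3 + burgersW y + y = 0 := by
  set s := √(1 / 27 + y ^ 2 / 4)
  have hs : s ^ 2 = 1 / 27 + y ^ 2 / 4 := sq_sqrt (by positivity)
  have hys : |y / 2| ≤ s := abs_le_sqrt (by linarith [div_pow y 2 2])
  have ha : 0 ≤ -(y / 2) + s := by linarith [le_abs_self (y / 2)]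
  have hb : 0 ≤ y / 2 + s := by linarith [neg_abs_le (y / 2)]
  have hab : (-(y / 2) + s) * (y / 2 + s) = (1 / 3) ^ (3 : ℝ) := by
    norm_num; linear_combination hs
  have cbrt_ab : ((-(y / 2) + s) * (y / 2 + s)) ^ (1 / 3 : ℝ) = 1 / 3 := by
    rw [hab, ← rpow_mul (by norm_num)]; norm_num
  have h := rpow_third_sub_rpow_third_pow_three ha hb
  rw [cbrt_ab] at h
  unfold burgersW
  linear_combination h

lemma abs_burgersW_le_abs (y : ℝ) : |burgersW y| ≤ |y| := by
  set w := burgersW y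
  have hy : |y| = |w| * (1 + w ^ 2) := by
    rw [show y = -(w * (1 + w ^ 2)) by linear_combination burgersW_cubic y, abs_neg, abs_mul,
      abs_of_pos (by positivity : (0 : ℝ) < 1 + w ^ 2)]
  nlinarith [abs_nonneg w, sq_nonneg w]

lemma continuous_burgersW : Continuous burgersW := by
  unfold burgersW
  fun_prop (disch := norm_num)

lemma hasDerivAt_burgersW (y : ℝ) :
    HasDerivAt burgersW (-(1 + 3 * burgersW y ^ 2)⁻¹) y := by
  have hf : HasDerivAt (fun w : ℝ => -w - w ^ 3) (-(1 + 3 * burgersW y ^ 2)) (burgersW y) :=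
    ((hasDerivAt_neg _).sub (hasDerivAt_pow 3 _)).congr_deriv (by ring)
  rw [← inv_neg]
  refine HasDerivAt.of_local_left_inverse continuous_burgersW.continuousAt hf
    (by nlinarith [sq_nonneg (burgersW y)]) (Filter.Eventually.of_forall fun z => ?_)
  linear_combination -burgersW_cubic z

/-- `W̄⁽ⁿ⁾ = burgersWDerivRat n ∘ W̄` for `n ≤ 5`; the value `0` for `n > 5` is a placeholder. -/
noncomputable def burgersWDerivRat : ℕ → ℝ → ℝ
  | 0 => id
  | 1 => fun u => -(1 + 3 * u ^ 2)⁻¹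
  | 2 => fun u => -6 * u / (1 + 3 * u ^ 2) ^ 3
  | 3 => fun u => (6 - 90 * u ^ 2) / (1 + 3 * u ^ 2) ^ 5
  | 4 => fun u => (360 * u - 2160 * u ^ 3) / (1 + 3 * u ^ 2) ^ 7
  | 5 => fun u => (-360 + 20520 * u ^ 2 - 71280 * u ^ 4) / (1 + 3 * u ^ 2) ^ 9
  | _ => 0

/-- Dividing by `W̄' = -(1 + 3 W̄²)⁻¹` turns the chain rule into this recursion in `u = W̄`. -/
lemma hasDerivAt_burgersWDerivRat {n : ℕ} (hn : n < 5) (u : ℝ) :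
    HasDerivAt (burgersWDerivRat n) (-(1 + 3 * u ^ 2) * burgersWDerivRat (n + 1) u) u := by
  have hc : 1 + 3 * u ^ 2 ≠ 0 := by positivity
  have hC : HasDerivAt (fun u : ℝ => 1 + 3 * u ^ 2) (6 * u) u :=
    (((hasDerivAt_pow 2 u).const_mul 3).const_add 1).congr_deriv (by ring)
  interval_cases n <;> simp only [burgersWDerivRat]
  · exact (hasDerivAt_id u).congr_deriv (by field_simp)
  · exact (hC.inv hc).neg.congr_deriv (by field_simp)
  · exact (((hasDerivAt_id u).const_mul (-6)).div (hC.pow 3) (pow_ne_zero _ hc)).congr_deriv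
      (by simp only [Pi.pow_apply, id]; field_simp; ring)
  · exact ((((hasDerivAt_pow 2 u).const_mul 90).const_sub 6).div (hC.pow 5)
      (pow_ne_zero _ hc)).congr_deriv (by simp only [Pi.pow_apply]; field_simp; ring)
  · exact ((((hasDerivAt_id u).const_mul 360).sub ((hasDerivAt_pow 3 u).const_mul 2160)).div
      (hC.pow 7) (pow_ne_zero _ hc)).congr_deriv
      (by simp only [Pi.pow_apply, Pi.sub_apply, id]; field_simp; ring)

lemma deriv_comp_burgersW {φ ψ : ℝ → ℝ} (hφ : ∀ u, HasDerivAt φ (-(1 + 3 * u ^ 2) * ψ u) u) :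
    deriv (φ ∘ burgersW) = ψ ∘ burgersW := by
  funext y
  have hc : 1 + 3 * burgersW y ^ 2 ≠ 0 := by positivity
  rw [((hφ (burgersW y)).comp y (hasDerivAt_burgersW y)).deriv, Function.comp_apply]
  field_simp

lemma iteratedDeriv_burgersW {n : ℕ} (hn : n ≤ 5) :
    iteratedDeriv n burgersW = burgersWDerivRat n ∘ burgersW := by
  induction n with
  | zero => rfl
  | succ n ih =>
    rw [iteratedDeriv_succ, ih (by omega)]
    exact deriv_comp_burgersW (hasDerivAt_burgersWDerivRat (by omega))

lemma abs_burgersWDerivRat_three_le {u : ℝ} (hu : |u| ≤ 1 / 5) : |burgersWDerivRat 3 u| ≤ 6 := by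
  have hu2 : u ^ 2 ≤ 1 / 25 := by nlinarith [sq_abs u, abs_nonneg u]
  have h0 : 0 ≤ u ^ 2 := sq_nonneg u
  simp only [burgersWDerivRat]
  rw [abs_div, abs_of_pos (by positivity : (0 : ℝ) < (1 + 3 * u ^ 2) ^ 5),
    div_le_iff₀ (by positivity), abs_le]
  constructor <;> nlinarith [pow_nonneg h0 2, pow_nonneg h0 3, pow_nonneg h0 4, pow_nonneg h0 5]

lemma abs_burgersWDerivRat_four_le {u : ℝ} (hu : |u| ≤ 1 / 5) : |burgersWDerivRat 4 u| ≤ 30 := by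
  set t := |u|
  have ht0 : 0 ≤ t := abs_nonneg u
  have hu2 : u ^ 2 = t ^ 2 := (sq_abs u).symm
  have hnum : |360 * u - 2160 * u ^ 3| = t * (360 - 2160 * t ^ 2) := by
    rw [show 360 * u - 2160 * u ^ 3 = u * (360 - 2160 * u ^ 2) by ring, abs_mul, hu2,
      abs_of_pos (by nlinarith : (0 : ℝ) < 360 - 2160 * t ^ 2)]
  simp only [burgersWDerivRat]
  rw [abs_div, hnum, abs_of_pos (by positivity : (0 : ℝ) < (1 + 3 * u ^ 2) ^ 7),
    div_le_iff₀ (by positivity), hu2]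
  nlinarith [sq_nonneg (1 - 6 * t - (15 / 2) * t ^ 2 - 9 * t ^ 3), sq_nonneg (t ^ 2 * (t - 5 / 64)),
    sq_nonneg (t ^ 2), sq_nonneg (t ^ 4), sq_nonneg (t ^ 5), sq_nonneg (t ^ 6), sq_nonneg (t ^ 7),
    pow_nonneg ht0 8, pow_nonneg ht0 10, pow_nonneg ht0 12, pow_nonneg ht0 14]

lemma abs_burgersWDerivRat_five_le {u : ℝ} (hu : |u| ≤ 1 / 5) : |burgersWDerivRat 5 u| ≤ 360 := by
  have hu2 : u ^ 2 ≤ 1 / 25 := by nlinarith [sq_abs u, abs_nonneg u]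
  have h0 : 0 ≤ u ^ 2 := sq_nonneg u
  simp only [burgersWDerivRat]
  rw [abs_div, abs_of_pos (by positivity : (0 : ℝ) < (1 + 3 * u ^ 2) ^ 9),
    div_le_iff₀ (by positivity), abs_le]
  constructor <;>
  nlinarith [sq_nonneg (66 * u ^ 2 - 5), pow_nonneg h0 2, pow_nonneg h0 3, pow_nonneg h0 4,
    pow_nonneg h0 5, pow_nonneg h0 6, pow_nonneg h0 7, pow_nonneg h0 8, pow_nonneg h0 9]

/-- Near the origin (`|y| ≤ 1/5`) the higher iterated derivatives of `W̄` satisfy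
`|W̄⁽³⁾(y)| ≤ 6`, `|W̄⁽⁴⁾(y)| ≤ 30`, and `|W̄⁽⁵⁾(y)| ≤ 360`. -/
theorem burgersW_higher_derivs_near_zero (y : ℝ) (hy : |y| ≤ 1 / 5) :
    |iteratedDeriv 3 burgersW y| ≤ 6 ∧
      |iteratedDeriv 4 burgersW y| ≤ 30 ∧
      |iteratedDeriv 5 burgersW y| ≤ 360 := by
  have hW : |burgersW y| ≤ 1 / 5 := (abs_burgersW_le_abs y).trans hy
  simp only [iteratedDeriv_burgersW (by norm_num : (3 : ℕ) ≤ 5),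
    iteratedDeriv_burgersW (by norm_num : (4 : ℕ) ≤ 5),
    iteratedDeriv_burgersW le_rfl, Function.comp_apply]
  exact ⟨abs_burgersWDerivRat_three_le hW, abs_burgersWDerivRat_four_le hW,
    abs_burgersWDerivRat_five_le hW⟩
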